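/- If G is a graph of order n with minimum degree δ(G) = 0 (i.e., G has an isolated vertex), then the coalition number C(G) equals n if and only if G is isomorphic to the disjoint union K_1 ∪ K_{n-1} of an isolated vertex and a complete graph on n-1 vertices. -/

import Mathlib

open SimpleGraph

attribute [local instance] Classical.propDecidable

def Dominates {V : Type*} (G : SimpleGraph V) (S : Set V) : Prop :=
  ∀ v, v ∉ S → ∃ u ∈ S, G.Adj u v

def Coalition {V : Type*} (G : SimpleGraph V) (A B : Set V) : Prop :=
  Disjoint A B ∧ ¬ Dominates G A ∧ ¬ Dominates G B ∧ Dominates G (A ∪ B)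

def IsCoalitionPartition {V : Type*} (G : SimpleGraph V) (P : Finset (Set V)) : Prop :=
  (∀ A ∈ P, A.Nonempty) ∧
  (∀ A ∈ P, ∀ B ∈ P, A ≠ B → Disjoint A B) ∧
  (∀ v : V, ∃ A ∈ P, v ∈ A) ∧
  (∀ A ∈ P, (Dominates G A ∧ ∃ v, A = {v}) ∨
    (¬ Dominates G A ∧ ∃ B ∈ P, B ≠ A ∧ Coalition G A B))

noncomputable def coalitionNumber {V : Type*} (G : SimpleGraph V) : ℕ :=
  sSup {n | ∃ P : Finset (Set V), IsCoalitionPartition G P ∧ P.card = n}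

def coalitionGraph {V : Type*} (G : SimpleGraph V) (P : Finset (Set V)) :
    SimpleGraph {A : Set V // A ∈ P} where
  Adj A B := Coalition G A.1 B.1
  symm := by
    constructor
    rintro A B ⟨d, na, nb, u⟩
    exact ⟨d.symm, nb, na, by rwa [Set.union_comm]⟩
  loopless := by
    constructor
    rintro ⟨A, hA⟩ ⟨d, na, nb, u⟩
    rw [Set.union_self] at u
    exact na u

/-- `K_1 ∪ K_{n-1}`: vertex `0` is isolated, all other vertices are mutually adjacent. -/
def K1UnionComplete (n : ℕ) : SimpleGraph (Fin n) where
  Adj a b := a ≠ b ∧ a.val ≠ 0 ∧ b.val ≠ 0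
  symm := by constructor; rintro a b ⟨h1, h2, h3⟩; exact ⟨h1.symm, h3, h2⟩
  loopless := by constructor; rintro a ⟨h, -, -⟩; exact h rfl

/-!
An isolated vertex `w` lies in every dominating set. A coalition partition with `n` parts is the
partition into singletons. For `a ≠ w` the singleton `{a}` misses `w`, so it does not dominate and
its partner `{u}` must contain `w`; hence `{a, w}` dominates, which makes `a` adjacent to every
other vertex `b ≠ w`. So `G` is the complete graph with the edges at `w` removed, i.e.
`K_1 ∪ K_{n-1}`. Conversely, in that graph every singleton forms a coalition with `{w}`, and `{w}`
with any other singleton.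
-/

section Partitions

variable {V : Type*} {P : Finset (Set V)}

def singletonPartition (V : Type*) [Fintype V] : Finset (Set V) :=
  Finset.univ.map ⟨({·}), Set.singleton_injective⟩

@[simp]
lemma mem_singletonPartition [Fintype V] {A : Set V} :
    A ∈ singletonPartition V ↔ ∃ v, A = {v} := by
  simp [singletonPartition, eq_comm]

lemma card_singletonPartition [Fintype V] : (singletonPartition V).card = Fintype.card V := by
  simp [singletonPartition]

lemma exists_injective_mem_of_nonempty_of_disjoint (hne : ∀ A ∈ P, A.Nonempty)
    (hdis : ∀ A ∈ P, ∀ B ∈ P, A ≠ B → Disjoint A B) :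
    ∃ f : P → V, Function.Injective f ∧ ∀ A, f A ∈ A.1 := by
  choose f hf using fun A : P => hne A.1 A.2
  refine ⟨f, fun A B hAB => Subtype.ext ?_, hf⟩
  by_contra hne'
  exact Set.disjoint_left.mp (hdis A.1 A.2 B.1 B.2 hne') (hf A) (hAB ▸ hf B)

lemma card_le_of_nonempty_of_disjoint [Fintype V] (hne : ∀ A ∈ P, A.Nonempty)
    (hdis : ∀ A ∈ P, ∀ B ∈ P, A ≠ B → Disjoint A B) : P.card ≤ Fintype.card V := by
  obtain ⟨f, hf, -⟩ := exists_injective_mem_of_nonempty_of_disjoint hne hdis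
  simpa using Fintype.card_le_of_injective f hf

lemma eq_singletonPartition_of_card_eq [Fintype V] (hne : ∀ A ∈ P, A.Nonempty)
    (hdis : ∀ A ∈ P, ∀ B ∈ P, A ≠ B → Disjoint A B) (hcard : P.card = Fintype.card V) :
    P = singletonPartition V := by
  obtain ⟨f, hf, hfmem⟩ := exists_injective_mem_of_nonempty_of_disjoint hne hdis
  have hbij : Function.Bijective f :=
    (Fintype.bijective_iff_injective_and_card f).mpr ⟨hf, by simp [hcard]⟩
  have hsub : P ⊆ singletonPartition V := by
    intro A hA
    refine mem_singletonPartition.mpr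
      ⟨f ⟨A, hA⟩, Set.eq_singleton_iff_unique_mem.mpr ⟨hfmem ⟨A, hA⟩, fun v hv => ?_⟩⟩
    obtain ⟨B, rfl⟩ := hbij.2 v
    by_contra hBA
    have hne' : B.1 ≠ A := fun h => hBA (congrArg f (Subtype.ext h))
    exact Set.disjoint_left.mp (hdis B.1 B.2 A hA hne') (hfmem B) hv
  exact Finset.eq_of_subset_of_card_le hsub (by rw [hcard, card_singletonPartition])

end Partitions

section Coalitions

variable {V : Type*} [Fintype V] {G : SimpleGraph V}

lemma IsCoalitionPartition.card_le {P : Finset (Set V)} (hP : IsCoalitionPartition G P) :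
    P.card ≤ Fintype.card V :=
  card_le_of_nonempty_of_disjoint hP.1 hP.2.1

lemma IsCoalitionPartition.eq_singletonPartition {P : Finset (Set V)}
    (hP : IsCoalitionPartition G P) (hcard : P.card = Fintype.card V) :
    P = singletonPartition V :=
  eq_singletonPartition_of_card_eq hP.1 hP.2.1 hcard

lemma coalitionNumber_eq_card_iff [Nonempty V] :
    coalitionNumber G = Fintype.card V ↔ IsCoalitionPartition G (singletonPartition V) := by
  set S := {n | ∃ P : Finset (Set V), IsCoalitionPartition G P ∧ P.card = n}
  have hbdd : BddAbove S := ⟨Fintype.card V, by rintro _ ⟨P, hP, rfl⟩; exact hP.card_le⟩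
  constructor
  · intro h
    have hS : S.Nonempty := by
      refine Set.nonempty_iff_ne_empty.mpr fun hS => Fintype.card_ne_zero (α := V) ?_
      rw [← h]
      change sSup S = 0
      rw [hS, csSup_empty, Nat.bot_eq_zero]
    obtain ⟨P, hP, hcard⟩ : Fintype.card V ∈ S := h ▸ Nat.sSup_mem hS hbdd
    exact hP.eq_singletonPartition hcard ▸ hP
  · intro hP
    have hmem : Fintype.card V ∈ S := ⟨_, hP, card_singletonPartition⟩
    exact le_antisymm (csSup_le ⟨_, hmem⟩ fun _ ⟨_, hQ, hQc⟩ => hQc ▸ hQ.card_le)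
      (le_csSup hbdd hmem)

end Coalitions

section IsolatedVertex

variable {V : Type*} {G : SimpleGraph V} {w : V}

lemma Dominates.mem_of_forall_not_adj {S : Set V} (hS : Dominates G S)
    (hw : ∀ u, ¬ G.Adj u w) : w ∈ S := by
  by_contra hwS
  obtain ⟨u, -, hu⟩ := hS w hwS
  exact hw u hu

lemma IsCoalitionPartition.eq_deleteIncidenceSet_top [Fintype V]
    (hP : IsCoalitionPartition G (singletonPartition V)) (hw : ∀ u, ¬ G.Adj u w) :
    G = (⊤ : SimpleGraph V).deleteIncidenceSet w := by
  ext a b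
  rw [deleteIncidenceSet_adj, top_adj]
  refine ⟨fun hab => ⟨hab.ne, fun h => hw b (h ▸ hab.symm), fun h => hw a (h ▸ hab)⟩, ?_⟩
  rintro ⟨hab, haw, hbw⟩
  rcases hP.2.2.2 {a} (mem_singletonPartition.mpr ⟨a, rfl⟩) with ⟨hdom, -⟩ | ⟨-, B, hB, -, hco⟩
  · exact absurd (hdom.mem_of_forall_not_adj hw) (Ne.symm haw)
  obtain ⟨u, rfl⟩ := mem_singletonPartition.mp hB
  have hu : u = w := by
    have := hco.2.2.2.mem_of_forall_not_adj hw
    simp only [Set.mem_union, Set.mem_singleton_iff] at this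
    exact this.resolve_left (Ne.symm haw) |>.symm
  subst hu
  obtain ⟨x, hx, hxb⟩ := hco.2.2.2 b (by simp [Ne.symm hab, hbw])
  rcases hx with rfl | rfl
  · exact hxb
  · exact absurd hxb.symm (hw b)

end IsolatedVertex

section CompleteMinusVertex

variable {V : Type*} {w : V}

lemma not_dominates_singleton_deleteIncidenceSet_top {a b : V} (hab : a ≠ b) :
    ¬ Dominates ((⊤ : SimpleGraph V).deleteIncidenceSet w) {a} := by
  intro hdom
  by_cases haw : a = w
  · obtain ⟨x, rfl, hx⟩ := hdom b (Ne.symm hab)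
    exact (deleteIncidenceSet_adj.mp hx).2.1 haw
  · obtain ⟨x, rfl, hx⟩ := hdom w (Ne.symm haw)
    exact (deleteIncidenceSet_adj.mp hx).2.2 rfl

lemma coalition_singleton_deleteIncidenceSet_top {a b : V} (hab : a ≠ b) (h : a = w ∨ b = w) :
    Coalition ((⊤ : SimpleGraph V).deleteIncidenceSet w) {a} {b} := by
  refine ⟨Set.disjoint_singleton.mpr hab, not_dominates_singleton_deleteIncidenceSet_top hab,
    not_dominates_singleton_deleteIncidenceSet_top (Ne.symm hab), fun y hy => ?_⟩
  simp only [Set.mem_union, Set.mem_singleton_iff, not_or] at hy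
  obtain ⟨x, hx, hxw⟩ : ∃ x ∈ ({a} ∪ {b} : Set V), x ≠ w := by
    rcases h with rfl | rfl
    · exact ⟨b, by simp, Ne.symm hab⟩
    · exact ⟨a, by simp, hab⟩
  refine ⟨x, hx, deleteIncidenceSet_adj.mpr ⟨?_, hxw, ?_⟩⟩
  · rcases hx with rfl | rfl
    exacts [Ne.symm hy.1, Ne.symm hy.2]
  · rintro rfl
    rcases h with rfl | rfl
    exacts [hy.1 rfl, hy.2 rfl]

lemma isCoalitionPartition_singletonPartition_deleteIncidenceSet_top [Fintype V] (w : V) :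
    IsCoalitionPartition ((⊤ : SimpleGraph V).deleteIncidenceSet w) (singletonPartition V) := by
  refine ⟨?_, ?_, fun v => ⟨{v}, by simp, rfl⟩, ?_⟩
  · simp
  · simp only [mem_singletonPartition]
    rintro _ ⟨a, rfl⟩ _ ⟨b, rfl⟩ hab
    exact Set.disjoint_singleton.mpr (fun h => hab (h ▸ rfl))
  simp only [mem_singletonPartition]
  rintro _ ⟨v, rfl⟩
  obtain ⟨u, huv⟩ | hv := em (∃ u, u ≠ v)
  swap
  · exact Or.inl ⟨fun u hu => (hv ⟨u, hu⟩).elim, v, rfl⟩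
  refine Or.inr ⟨not_dominates_singleton_deleteIncidenceSet_top (Ne.symm huv), ?_⟩
  by_cases hvw : v = w
  · exact ⟨{u}, ⟨u, rfl⟩, by simpa using huv,
      coalition_singleton_deleteIncidenceSet_top (Ne.symm huv) (Or.inl hvw)⟩
  · exact ⟨{w}, ⟨w, rfl⟩, by simpa [eq_comm] using hvw,
      coalition_singleton_deleteIncidenceSet_top hvw (Or.inr rfl)⟩

end CompleteMinusVertex

lemma k1UnionComplete_eq_deleteIncidenceSet_top (n : ℕ) [NeZero n] :
    K1UnionComplete n = (⊤ : SimpleGraph (Fin n)).deleteIncidenceSet 0 := by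
  ext a b
  simp [K1UnionComplete, deleteIncidenceSet_adj, Fin.val_eq_zero_iff]

lemma nonempty_iso_k1UnionComplete_iff {V : Type*} [Fintype V] [Nonempty V]
    (G : SimpleGraph V) :
    Nonempty (G ≃g K1UnionComplete (Fintype.card V)) ↔
      ∃ w, G = (⊤ : SimpleGraph V).deleteIncidenceSet w := by
  rw [k1UnionComplete_eq_deleteIncidenceSet_top]
  constructor
  · rintro ⟨f⟩
    refine ⟨f.symm 0, ?_⟩
    ext a b
    rw [← f.map_adj_iff]
    simp [deleteIncidenceSet_adj, f.eq_symm_apply]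
  · rintro ⟨w, rfl⟩
    let e := (Fintype.equivFin V).trans (Equiv.swap (Fintype.equivFin V w) 0)
    have hew : e w = 0 := by simp [e]
    exact ⟨⟨e, by simp [deleteIncidenceSet_adj, ← hew]⟩⟩

theorem stmt0 {V : Type*} [Fintype V] [Nonempty V] (G : SimpleGraph V)
    (hδ : G.minDegree = 0) :
    coalitionNumber G = Fintype.card V ↔
      Nonempty (G ≃g K1UnionComplete (Fintype.card V)) := by
  obtain ⟨w, hw⟩ := G.exists_minimal_degree_vertex
  have hw_isolated : ∀ u, ¬ G.Adj u w := fun u hu =>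
    ((G.degree_eq_zero_iff_notMem_support w).mp (hw ▸ hδ)) ⟨u, hu.symm⟩
  rw [coalitionNumber_eq_card_iff, nonempty_iso_k1UnionComplete_iff]
  exact ⟨fun hP => ⟨w, hP.eq_deleteIncidenceSet_top hw_isolated⟩,
    fun ⟨w', hG⟩ => hG ▸ isCoalitionPartition_singletonPartition_deleteIncidenceSet_top w'⟩
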